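/- Let ℛ be a linear growing TRS over 𝓕 and let 𝒟(ℛ) be the powerset-pair automaton built from 𝒞'_{NF_{ℛ•}}(ℛ). For every s ∈ 𝒯(𝓕): if s →_{Γ_𝒟}* [S,P] and P ⊆ Q_f, then for every redex position p of s, s[•]_p ∈ (→_ℛ*)[NF_{ℛ•}], i.e., s[•]_p rewrites in ℛ to a ground ℛ•-normal form. -/

import Mathlib

set_option maxHeartbeats 1000000

/-! ## Terms over a signature -/

/-- Terms over a signature given by a type `F` of function symbols together with
an arity function `ar`; variables are natural numbers. -/
inductive Term (F : Type) (ar : F → ℕ) : Type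
  | var : ℕ → Term F ar
  | app : (f : F) → (Fin (ar f) → Term F ar) → Term F ar

namespace Term

variable {F : Type} {ar : F → ℕ}

/-- The (finite) set of variables of a term. -/
def vars : Term F ar → Finset ℕ
  | var n => {n}
  | app _ ts => Finset.univ.biUnion fun i => (ts i).vars

/-- A term is ground if it contains no variables. -/
def Ground (t : Term F ar) : Prop := t.vars = ∅

/-- The number of occurrences of the variable `n` in a term. -/
def count (n : ℕ) : Term F ar → ℕ
  | var m => if m = n then 1 else 0
  | app _ ts => ∑ i, (ts i).count n

/-- A term is linear if no variable occurs twice in it. -/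
def Linear (t : Term F ar) : Prop := ∀ n, t.count n ≤ 1

/-- Applying a substitution to a term. -/
def subst (σ : ℕ → Term F ar) : Term F ar → Term F ar
  | var n => σ n
  | app f ts => app f fun i => (ts i).subst σ

/-- The subterm at a position (a list of argument indices), if the position is valid. -/
def subtermAt : Term F ar → List ℕ → Option (Term F ar)
  | t, [] => some t
  | var _, _ :: _ => none
  | app f ts, i :: p => if h : i < ar f then (ts ⟨i, h⟩).subtermAt p else none

/-- Replacing the subterm at a position, if the position is valid. -/
def replaceAt : Term F ar → List ℕ → Term F ar → Option (Term F ar)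
  | _, [], u => some u
  | var _, _ :: _, _ => none
  | app f ts, i :: p, u =>
      if h : i < ar f then
        ((ts ⟨i, h⟩).replaceAt p u).map fun s => app f (Function.update ts ⟨i, h⟩ s)
      else none

/-- `s.IsSubtermOf t` : `s` is a subterm of `t`. -/
def IsSubtermOf (s t : Term F ar) : Prop := ∃ p, t.subtermAt p = some s

/-- Relabelling of function symbols along an arity-preserving map of signatures. -/
def relabel {G : Type} {arG : G → ℕ} (φ : F → G) (h : ∀ f, arG (φ f) = ar f) :
    Term F ar → Term G arG
  | var n => var n
  | app f ts => app (φ f) fun i => (ts (Fin.cast (h f) i)).relabel φ h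

end Term

/-! ## Rewriting -/

/-- One-step rewriting with a set of rewrite rules: there are a position `p` of `s`,
a rule `(l, r)` and a substitution `σ` with `s|_p = lσ` and `t = s[rσ]_p`. -/
def Rewrites {F : Type} {ar : F → ℕ} (R : Set (Term F ar × Term F ar))
    (s t : Term F ar) : Prop :=
  ∃ (p : List ℕ) (l r : Term F ar) (σ : ℕ → Term F ar),
    (l, r) ∈ R ∧ s.subtermAt p = some (l.subst σ) ∧ s.replaceAt p (r.subst σ) = some t

/-- Many-step rewriting (reflexive–transitive closure). -/
abbrev RewritesStar {F : Type} {ar : F → ℕ} (R : Set (Term F ar × Term F ar)) :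
    Term F ar → Term F ar → Prop :=
  Relation.ReflTransGen (Rewrites R)

/-- A term rewriting system: a finite set of rules whose left-hand sides are not variables. -/
structure TRS (F : Type) (ar : F → ℕ) where
  rules : Set (Term F ar × Term F ar)
  finite : rules.Finite
  lhs_not_var : ∀ lr ∈ rules, ∀ n, lr.1 ≠ Term.var n

namespace TRS

variable {F : Type} {ar : F → ℕ}

def LeftLinear (R : TRS F ar) : Prop := ∀ lr ∈ R.rules, lr.1.Linear

def RightLinear (R : TRS F ar) : Prop := ∀ lr ∈ R.rules, lr.2.Linear

/-- A TRS is linear if all left- and right-hand sides are linear terms. -/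
def IsLinear (R : TRS F ar) : Prop := R.LeftLinear ∧ R.RightLinear

/-- A TRS is growing if every variable occurring both in the left- and the right-hand
side of a rule occurs at depth 1 in the left-hand side. -/
def Growing (R : TRS F ar) : Prop :=
  ∀ lr ∈ R.rules, ∀ n ∈ lr.1.vars, n ∈ lr.2.vars →
    ∀ (f : F) (ts : Fin (ar f) → Term F ar), lr.1 = Term.app f ts →
      ∀ i, n ∈ (ts i).vars → ts i = Term.var n

/-- A redex is an instance of a left-hand side. -/
def IsRedex (R : TRS F ar) (s : Term F ar) : Prop :=
  ∃ lr ∈ R.rules, ∃ σ : ℕ → Term F ar, s = lr.1.subst σ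

/-- `p` is a redex position of `s`. -/
def RedexPos (R : TRS F ar) (s : Term F ar) (p : List ℕ) : Prop :=
  ∃ u, s.subtermAt p = some u ∧ R.IsRedex u

def Reducible (R : TRS F ar) (s : Term F ar) : Prop := ∃ p, R.RedexPos s p

/-- A term is root-stable if it cannot be rewritten to a redex. -/
def RootStable (R : TRS F ar) (s : Term F ar) : Prop :=
  ¬ ∃ t, RewritesStar R.rules s t ∧ R.IsRedex t

/-- Ground normal forms. -/
def NFset (R : TRS F ar) : Set (Term F ar) := { t | t.Ground ∧ ¬ R.Reducible t }

/-- Ground redexes. -/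
def RedexSet (R : TRS F ar) : Set (Term F ar) := { t | t.Ground ∧ R.IsRedex t }

/-- Root-stable ground terms. -/
def RSset (R : TRS F ar) : Set (Term F ar) := { t | t.Ground ∧ R.RootStable t }

/-- Relabelling a TRS along an arity-preserving map of signatures. -/
def relabel {G : Type} {arG : G → ℕ} (R : TRS F ar) (φ : F → G)
    (h : ∀ f, arG (φ f) = ar f) : TRS G arG where
  rules := (fun lr => (lr.1.relabel φ h, lr.2.relabel φ h)) '' R.rules
  finite := R.finite.image _
  lhs_not_var := by
    rintro lr ⟨lr0, h0, rfl⟩ n hn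
    dsimp only at hn
    cases h1 : lr0.1 with
    | var m => exact absurd h1 (R.lhs_not_var lr0 h0 m)
    | app f ts =>
        rw [h1] at hn
        simp only [Term.relabel] at hn
        cases hn

end TRS

/-! ## Tree automata -/

/-- A transition rule `f(q₁,…,qₙ) → q` of a bottom-up tree automaton. -/
abbrev TARule (F : Type) (ar : F → ℕ) (Q : Type) : Type :=
  (f : F) × ((Fin (ar f) → Q) × Q)

/-- A (finite bottom-up) tree automaton without ε-transitions. -/
structure TreeAutomaton (F : Type) (ar : F → ℕ) (Q : Type) where
  trans : Set (TARule F ar Q)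
  final : Set Q

/-- `Reaches Δ t q` : the ground term `t` rewrites to the state `q` using the
transition rules `Δ`. -/
inductive Reaches {F : Type} {ar : F → ℕ} {Q : Type} (Δ : Set (TARule F ar Q)) :
    Term F ar → Q → Prop
  | app {f : F} {ts : Fin (ar f) → Term F ar} {qs : Fin (ar f) → Q} {q : Q} :
      (∀ i, Reaches Δ (ts i) (qs i)) → (⟨f, qs, q⟩ : TARule F ar Q) ∈ Δ →
      Reaches Δ (Term.app f ts) q

/-- `ReachesT Δ θ t q` : the term `t`, whose variables are interpreted as the states
given by `θ`, rewrites to the state `q` using the transition rules `Δ`. -/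
inductive ReachesT {F : Type} {ar : F → ℕ} {Q : Type} (Δ : Set (TARule F ar Q))
    (θ : ℕ → Q) : Term F ar → Q → Prop
  | var (n : ℕ) : ReachesT Δ θ (Term.var n) (θ n)
  | app {f : F} {ts : Fin (ar f) → Term F ar} {qs : Fin (ar f) → Q} {q : Q} :
      (∀ i, ReachesT Δ θ (ts i) (qs i)) → (⟨f, qs, q⟩ : TARule F ar Q) ∈ Δ →
      ReachesT Δ θ (Term.app f ts) q

/-- The language of a tree automaton: all ground terms reaching a final state. -/
def Lang {F : Type} {ar : F → ℕ} {Q : Type} (A : TreeAutomaton F ar Q) :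
    Set (Term F ar) :=
  { t | t.Ground ∧ ∃ q ∈ A.final, Reaches A.trans t q }

/-- A set of ground terms is recognizable if it is the language of some finite
tree automaton. -/
def Recognizable {F : Type} {ar : F → ℕ} (T : Set (Term F ar)) : Prop :=
  ∃ (Q : Type) (_ : Fintype Q) (A : TreeAutomaton F ar Q), T = Lang A

/-- The set of states occurring in a set of transition rules. -/
def statesOf {F : Type} {ar : F → ℕ} {Q : Type} (Γ : Set (TARule F ar Q)) : Set Q :=
  { q | ∃ ρ ∈ Γ, ρ.2.2 = q ∨ ∃ i, ρ.2.1 i = q }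

/-! ## The automaton `ℬ(ℛ)` -/

/-- The canonical representative of the state `⟨t⟩` of `ℬ(ℛ)`: all variables are
identified with the single state `⟨x⟩`, represented by `var 0`. -/
def stPattern {F : Type} {ar : F → ℕ} : Term F ar → Term F ar
  | Term.var _ => Term.var 0
  | Term.app f ts => Term.app f ts

/-- `S_ℛ`: the set of all subterms of arguments of left-hand sides of `ℛ`. -/
def SR {F : Type} {ar : F → ℕ} (R : TRS F ar) : Set (Term F ar) :=
  { s | ∃ lr ∈ R.rules, ∃ (f : F) (ts : Fin (ar f) → Term F ar),
        lr.1 = Term.app f ts ∧ ∃ i, s.IsSubtermOf (ts i) }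

/-- The representatives of the states of `ℬ(ℛ)`: the patterns of terms of `S_ℛ`,
together with `⟨x⟩`. -/
def BStateSet {F : Type} {ar : F → ℕ} (R : TRS F ar) : Set (Term F ar) :=
  stPattern '' SR R ∪ {Term.var 0}

/-- The matching rules of `ℬ(ℛ)` (with states encoded by `enc`):
`f(⟨t₁⟩,…,⟨tₙ⟩) → ⟨t⟩` for every `t = f(t₁,…,tₙ) ∈ S_ℛ`. -/
def BMatch {F : Type} {ar : F → ℕ} {Q : Type} (R : TRS F ar) (enc : Term F ar → Q) :
    Set (TARule F ar Q) :=
  { ρ | ∃ (f : F) (ts : Fin (ar f) → Term F ar), Term.app f ts ∈ SR R ∧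
        ρ = ⟨f, fun i => enc (stPattern (ts i)), enc (Term.app f ts)⟩ }

/-- The propagation rules `f(⟨x⟩,…,⟨x⟩) → ⟨x⟩` for every function symbol `f`. -/
def BProp {F : Type} {ar : F → ℕ} {Q : Type} (enc : Term F ar → Q) :
    Set (TARule F ar Q) :=
  { ρ | ∃ f : F, ρ = ⟨f, fun _ => enc (Term.var 0), enc (Term.var 0)⟩ }

/-- The transition rules of the automaton `ℬ(ℛ)`. -/
def BTrans {F : Type} {ar : F → ℕ} {Q : Type} (R : TRS F ar) (enc : Term F ar → Q) :
    Set (TARule F ar Q) :=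
  BMatch R enc ∪ BProp enc

/-- `Σ(t)`: the set of ground instances of the term `t`. -/
def GInst {F : Type} {ar : F → ℕ} (t : Term F ar) : Set (Term F ar) :=
  { s | s.Ground ∧ ∃ σ, s = t.subst σ }

/-! ## Saturation -/

/-- The state `qᵢ` associated to the argument `lᵢ` of a left-hand side in the
saturation rule: `lᵢθ` if `lᵢ` is a variable occurring in `r` (whose variable set
is `rv`), and `⟨lᵢ⟩` otherwise. -/
def satArg {F : Type} {ar : F → ℕ} {Q : Type} (enc : Term F ar → Q) (θ : ℕ → Q)
    (rv : Finset ℕ) : Term F ar → Q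
  | Term.var n => if n ∈ rv then θ n else enc (Term.var 0)
  | Term.app f ts => enc (Term.app f ts)

/-- One step of the saturation process: add all transition rules `f(q₁,…,qₙ) → q`
obtained from a rewrite rule `f(l₁,…,lₙ) → r` and a state substitution `θ`
(with values among the states `Qc` of the automaton) such that `rθ →_Γ* q`. -/
def satStep {F : Type} {ar : F → ℕ} {Q : Type} (R : TRS F ar) (enc : Term F ar → Q)
    (Qc : Set Q) (Γ : Set (TARule F ar Q)) : Set (TARule F ar Q) :=
  Γ ∪ { ρ | ∃ (f : F) (ls : Fin (ar f) → Term F ar) (r : Term F ar) (θ : ℕ → Q) (q : Q),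
        (Term.app f ls, r) ∈ R.rules ∧ (∀ n ∈ r.vars, θ n ∈ Qc) ∧ ReachesT Γ θ r q ∧
        ρ = ⟨f, fun i => satArg enc θ r.vars (ls i), q⟩ }

/-- The saturated set of transition rules: the closure of `Γ0` under the saturation
inference rule. -/
def satGamma {F : Type} {ar : F → ℕ} {Q : Type} (R : TRS F ar) (enc : Term F ar → Q)
    (Qc : Set Q) (Γ0 : Set (TARule F ar Q)) : Set (TARule F ar Q) :=
  ⋃ n, (satStep R enc Qc)^[n] Γ0

/-! ## The automaton `𝒞_T(ℛ)` and its extension `𝒞'_T(ℛ)` -/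

/-- The data of the construction of the automaton `𝒞_T(ℛ)`: an automaton `𝒜_T`
recognizing `T` with all states accessible and state set `QA`, together with an
encoding `enc` of the states `⟨t⟩` of `ℬ(ℛ)` into the common state type `Q`, such
that every state common to `𝒜_T` and `ℬ(ℛ)` accepts the same set of terms in both
automata. -/
structure CSetup {G : Type} [Fintype G] {arG : G → ℕ} (Q : Type) [Fintype Q]
    (Rg : TRS G arG) (T : Set (Term G arG)) where
  enc : Term G arG → Q
  A : TreeAutomaton G arG Q
  QA : Set Q
  henc : Set.InjOn enc (BStateSet Rg)
  hAstates : ∀ ρ ∈ A.trans, ρ.2.2 ∈ QA ∧ ∀ i, ρ.2.1 i ∈ QA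
  hfinal : A.final ⊆ QA
  hacc : ∀ q ∈ QA, ∃ s : Term G arG, s.Ground ∧ Reaches A.trans s q
  hground : ∃ s : Term G arG, s.Ground
  hshared : ∀ q ∈ QA ∩ enc '' BStateSet Rg, ∀ s : Term G arG,
      Reaches A.trans s q ↔ Reaches (BTrans Rg enc) s q
  hT : T = Lang A

namespace CSetup

variable {G : Type} [Fintype G] {arG : G → ℕ} {Q : Type} [Fintype Q]
  {Rg : TRS G arG} {T : Set (Term G arG)}

/-- The set of states of the automaton `𝒞_T(ℛ)`. -/
def Qstates (C : CSetup Q Rg T) : Set Q := C.QA ∪ C.enc '' BStateSet Rg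

/-- The transition rules of `𝒞_T(ℛ)` before saturation: the union of `𝒜_T` and `ℬ(ℛ)`. -/
def Γ0 (C : CSetup Q Rg T) : Set (TARule G arG Q) := C.A.trans ∪ BTrans Rg C.enc

/-- The transition rules of `𝒞_T(ℛ)` after saturation. -/
def Γsat (C : CSetup Q Rg T) : Set (TARule G arG Q) :=
  satGamma Rg C.enc C.Qstates C.Γ0

end CSetup

/-- The redex rules `f(⟪l₁⟫,…,⟪lₙ⟫) → q_r` for every left-hand side `f(l₁,…,lₙ)`. -/
def RedexRules {F : Type} {ar : F → ℕ} {Q : Type} (R : TRS F ar)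
    (enc2 : Term F ar → Q) (qr : Q) : Set (TARule F ar Q) :=
  { ρ | ∃ (f : F) (ls : Fin (ar f) → Term F ar) (r : Term F ar),
        (Term.app f ls, r) ∈ R.rules ∧
        ρ = ⟨f, fun i => enc2 (stPattern (ls i)), qr⟩ }

/-- The rules `f(⟨x⟩,…,q_r,…,⟨x⟩) → q_r`. -/
def QrProp {F : Type} {ar : F → ℕ} {Q : Type} (enc : Term F ar → Q) (qr : Q) :
    Set (TARule F ar Q) :=
  { ρ | ∃ (f : F) (j : Fin (ar f)),
        ρ = ⟨f, fun i => if i = j then qr else enc (Term.var 0), qr⟩ }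

/-- The data of the construction of the automaton `𝒞'_T(ℛ)`: `𝒞_T(ℛ)` extended with
a fresh copy `⟪t⟫` (encoded by `enc2`, with `⟪x⟫ = ⟨x⟩`) of the states of `ℬ(ℛ)` and
a fresh state `q_r`. -/
structure CpSetup {G : Type} [Fintype G] {arG : G → ℕ} (Q : Type) [Fintype Q]
    (Rg : TRS G arG) (T : Set (Term G arG)) extends CSetup Q Rg T where
  enc2 : Term G arG → Q
  qr : Q
  henc2 : Set.InjOn enc2 (BStateSet Rg)
  hx : enc2 (Term.var 0) = enc (Term.var 0)
  hfresh : (enc2 '' (BStateSet Rg \ {Term.var 0}) ∪ {qr}) ∩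
              (QA ∪ enc '' BStateSet Rg) = ∅
  hqr : qr ∉ enc2 '' (BStateSet Rg \ {Term.var 0})

namespace CpSetup

variable {G : Type} [Fintype G] {arG : G → ℕ} {Q : Type} [Fintype Q]
  {Rg : TRS G arG} {T : Set (Term G arG)}

/-- The transition rules `Γ'` of the automaton `𝒞'_T(ℛ)`. -/
def Γ' (C : CpSetup Q Rg T) : Set (TARule G arG Q) :=
  C.toCSetup.Γsat ∪ BMatch Rg C.enc2 ∪ RedexRules Rg C.enc2 C.qr ∪ QrProp C.enc C.qr

end CpSetup

/-! ## The signature `𝓖 = 𝓕 ∪ {•}` -/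

/-- The arity function of the extended signature `𝓕 ∪ {•}` (with `•` the fresh
constant `none`). -/
def arB {F : Type} (ar : F → ℕ) : Option F → ℕ
  | none => 0
  | some f => ar f

/-- The term `•`. -/
def bulletTm {F : Type} {ar : F → ℕ} : Term (Option F) (arB ar) :=
  Term.app none Fin.elim0

/-- The embedding of `𝒯(𝓕)`-terms into terms over `𝓕 ∪ {•}`. -/
def liftB {F : Type} {ar : F → ℕ} : Term F ar → Term (Option F) (arB ar) :=
  Term.relabel some (fun _ => rfl)

/-- A TRS over `𝓕` viewed as a TRS over `𝓕 ∪ {•}`. -/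
def TRS.liftB {F : Type} {ar : F → ℕ} (R : TRS F ar) : TRS (Option F) (arB ar) :=
  R.relabel some (fun _ => rfl)

/-- The TRS `ℛ• = ℛ ∪ {• → •}` over the signature `𝓕 ∪ {•}`. -/
def TRS.bullet {F : Type} {ar : F → ℕ} (R : TRS F ar) : TRS (Option F) (arB ar) where
  rules := R.liftB.rules ∪ {(bulletTm, bulletTm)}
  finite := R.liftB.finite.union (Set.finite_singleton _)
  lhs_not_var := by
    rintro lr (h | h) n hn
    · exact R.liftB.lhs_not_var lr h n hn
    · rw [Set.mem_singleton_iff] at h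
      rw [h] at hn
      simp [bulletTm] at hn

/-! ## The automaton `𝒟(ℛ)` -/

/-- For a symbol `g` and sets of states `Ss` for the arguments, the set
`g(S₁,…,Sₙ)↓` of states reachable from `g` applied to states chosen from the `Ssᵢ`. -/
def oneStep {G : Type} {arG : G → ℕ} {Q : Type} (Γ : Set (TARule G arG Q)) (g : G)
    (Ss : Fin (arG g) → Set Q) : Set Q :=
  { q | ∃ qs : Fin (arG g) → Q, (∀ i, qs i ∈ Ss i) ∧ (⟨g, qs, q⟩ : TARule G arG Q) ∈ Γ }

/-- `t↓` for a ground term `t`: the set of states reachable from `t`. -/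
def dn {G : Type} {arG : G → ℕ} {Q : Type} (Γ : Set (TARule G arG Q))
    (t : Term G arG) : Set Q :=
  { q | Reaches Γ t q }

/-- There is a rewrite rule with left-hand side `g(l₁,…,lₙ)` such that
`⟪lᵢ⟫ ∈ Ssᵢ` for all `i`. -/
def LhsMatch {G : Type} {arG : G → ℕ} {Q : Type} (Rg : TRS G arG)
    (enc2 : Term G arG → Q) (g : G) (Ss : Fin (arG g) → Set Q) : Prop :=
  ∃ (ls : Fin (arG g) → Term G arG) (r : Term G arG),
    (Term.app g ls, r) ∈ Rg.rules ∧ ∀ i, enc2 (stPattern (ls i)) ∈ Ss i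

/-- The transition rules of the automaton `𝒟(ℛ)` over `𝓕`, built from the transition
rules `Γ'` of `𝒞'_{NF}(ℛ)` over `𝓕 ∪ {•}`. -/
def DTrans {F : Type} {ar : F → ℕ} {Q : Type} (Rb : TRS (Option F) (arB ar))
    (Γ' : Set (TARule (Option F) (arB ar) Q))
    (enc enc2 : Term (Option F) (arB ar) → Q) :
    Set (TARule F ar (Set Q × Set Q)) :=
  { ρ | ∃ (f : F) (SP : Fin (ar f) → Set Q × Set Q) (P1 P2 : Set Q),
      P1 ⊆ (⋃ i : Fin (ar f), oneStep Γ' (some f)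
              (fun (j : Fin (ar f)) => if j = i then (SP j).2 else (SP j).1)) ∧
      (∀ (i : Fin (ar f)), ∀ q ∈ (SP i).2,
        (P1 ∩ oneStep Γ' (some f) (fun (j : Fin (ar f)) => if j = i then {q} else (SP j).1)).Nonempty) ∧
      ((LhsMatch Rb enc2 (some f) (fun i => (SP i).1) ∧ P2 = {enc (Term.var 0)}) ∨
       (¬ LhsMatch Rb enc2 (some f) (fun i => (SP i).1) ∧ P2 = (∅ : Set Q))) ∧
      ρ = ⟨f, SP, (oneStep Γ' (some f) (fun i => (SP i).1), P1 ∪ P2)⟩ }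

/-- The automaton `𝒟(ℛ)`: final states are the pairs `[S,P]` with `q_r ∈ S` and
`P ⊆ Q_f`. -/
def DAutomaton {F : Type} {ar : F → ℕ} {Q : Type} (Rb : TRS (Option F) (arB ar))
    (Γ' : Set (TARule (Option F) (arB ar) Q))
    (enc enc2 : Term (Option F) (arB ar) → Q) (qr : Q) (Qf : Set Q) :
    TreeAutomaton F ar (Set Q × Set Q) where
  trans := DTrans Rb Γ' enc enc2
  final := { SP | qr ∈ SP.1 ∧ SP.2 ⊆ Qf }

/-! ## Growing approximations -/

/-- `VarRepl t t'` : `t'` is obtained from `t` by replacing occurrences of variables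
by (possibly other) variables. -/
inductive VarRepl {F : Type} {ar : F → ℕ} : Term F ar → Term F ar → Prop
  | var (n m : ℕ) : VarRepl (Term.var n) (Term.var m)
  | app (f : F) (ts ts' : Fin (ar f) → Term F ar) :
      (∀ i, VarRepl (ts i) (ts' i)) → VarRepl (Term.app f ts) (Term.app f ts')

/-- `Rg` is a growing approximation of `R`: a right-linear growing TRS obtained from
`R` by replacing, in each right-hand side, occurrences of variables by variables not
occurring in the corresponding left-hand side. -/
def IsGrowingApprox {F : Type} {ar : F → ℕ} (R Rg : TRS F ar) : Prop :=
  Rg.RightLinear ∧ Rg.Growing ∧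
  (∀ lr ∈ Rg.rules, ∃ lr' ∈ R.rules, lr.1 = lr'.1 ∧ VarRepl lr'.2 lr.2 ∧
      ∀ n ∈ lr.2.vars, n ∉ lr.1.vars) ∧
  (∀ lr ∈ R.rules, ∃ lr' ∈ Rg.rules, lr.1 = lr'.1 ∧ VarRepl lr.2 lr'.2 ∧
      ∀ n ∈ lr'.2.vars, n ∉ lr'.1.vars)

/-! ## The signature `𝓖 = 𝓕 ∪ {f° : f ∈ 𝓕}` -/

/-- The arity function of the signature `𝓕 ∪ {f° : f ∈ 𝓕}` (`inl f` is `f`,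
`inr f` is `f°`). -/
def arC {F : Type} (ar : F → ℕ) : F ⊕ F → ℕ
  | Sum.inl f => ar f
  | Sum.inr f => ar f

/-- The embedding of `𝒯(𝓕)`-terms into terms over `𝓕 ∪ {f° : f ∈ 𝓕}`. -/
def liftC {F : Type} {ar : F → ℕ} : Term F ar → Term (F ⊕ F) (arC ar) :=
  Term.relabel Sum.inl (fun _ => rfl)

/-- `t°`: mark the root symbol of `t`. -/
def circTm {F : Type} {ar : F → ℕ} : Term F ar → Term (F ⊕ F) (arC ar)
  | Term.var n => Term.var n
  | Term.app f ts => Term.app (Sum.inr f) fun i => liftC (ts i)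

/-- A TRS over `𝓕` viewed as a TRS over `𝓕 ∪ {f° : f ∈ 𝓕}`. -/
def TRS.liftC {F : Type} {ar : F → ℕ} (R : TRS F ar) : TRS (F ⊕ F) (arC ar) :=
  R.relabel Sum.inl (fun _ => rfl)

/-- The TRS `𝒮° = 𝒮 ∪ {l° → r | l → r ∈ 𝒮}` over the signature `𝓕 ∪ {f° : f ∈ 𝓕}`. -/
def TRS.circ {F : Type} {ar : F → ℕ} (S : TRS F ar) : TRS (F ⊕ F) (arC ar) where
  rules := S.liftC.rules ∪ (fun lr => (circTm lr.1, _root_.liftC lr.2)) '' S.rules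
  finite := S.liftC.finite.union (S.finite.image _)
  lhs_not_var := by
    rintro lr (h | ⟨lr0, h0, rfl⟩) n hn
    · exact S.liftC.lhs_not_var lr h n hn
    · dsimp only at hn
      cases h1 : lr0.1 with
      | var m => exact absurd h1 (S.lhs_not_var lr0 h0 m)
      | app f ts =>
          rw [h1] at hn
          simp only [circTm] at hn
          cases hn

/-- The transitions added to `ℬ(𝒮°)` to obtain `𝒜_{REDEX_{𝒮°}}`:
`f(⟨l₁⟩,…,⟨lₙ⟩) → q_f` and `f°(⟨l₁⟩,…,⟨lₙ⟩) → q_f` for each left-hand side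
`f(l₁,…,lₙ)` of a rule of `𝒮`. -/
def CircRedexRules {F : Type} {ar : F → ℕ} {Q : Type} (S : TRS F ar)
    (enc : Term (F ⊕ F) (arC ar) → Q) (qf : Q) : Set (TARule (F ⊕ F) (arC ar) Q) :=
  { ρ | ∃ (f : F) (ls : Fin (ar f) → Term F ar) (r : Term F ar),
      (Term.app f ls, r) ∈ S.rules ∧
      (ρ = ⟨Sum.inl f, fun i => enc (stPattern (liftC (ls i))), qf⟩ ∨
       ρ = ⟨Sum.inr f, fun i => enc (stPattern (liftC (ls i))), qf⟩) }

/-! ## The automaton `𝒟'(ℛ,𝒮)` -/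

/-- The data of the construction of `𝒞'_{RS_{𝒮°}}(ℛ)`: the saturated automaton
`𝒞_{RS_{𝒮°}}(ℛ)`, a fresh copy `⟪t⟫` (encoded by `enc2`, with `⟪x⟫ = ⟨x⟩`) of the
states of `ℬ(ℛ)`, and an automaton `𝒞_{REDEX_𝒮}(𝒮)` (transitions `Etrans`, final
states `Qf'`) recognizing the non-`𝒮`-root-stable ground terms of `𝒯(𝓕)`. -/
structure CrsSetup {F : Type} [Fintype F] {ar : F → ℕ} (Q : Type) [Fintype Q]
    (R S : TRS F ar) extends CSetup Q R.liftC (TRS.RSset S.circ) where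
  enc2 : Term (F ⊕ F) (arC ar) → Q
  henc2 : Set.InjOn enc2 (BStateSet R.liftC)
  hx : enc2 (Term.var 0) = enc (Term.var 0)
  hfresh2 : (enc2 '' (BStateSet R.liftC \ {Term.var 0})) ∩
              (QA ∪ enc '' BStateSet R.liftC) = ∅
  Etrans : Set (TARule (F ⊕ F) (arC ar) Q)
  Qf' : Set Q
  hQf' : Qf' ⊆ statesOf Etrans
  hEfresh : statesOf Etrans ∩
      (QA ∪ enc '' BStateSet R.liftC ∪ enc2 '' (BStateSet R.liftC \ {Term.var 0})) = ∅
  hE : ∀ t : Term (F ⊕ F) (arC ar),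
      (t.Ground ∧ ∃ q ∈ Qf', Reaches Etrans t q) ↔
      (∃ s : Term F ar, t = liftC s ∧ s.Ground ∧ ¬ S.RootStable s)

namespace CrsSetup

variable {F : Type} [Fintype F] {ar : F → ℕ} {Q : Type} [Fintype Q] {R S : TRS F ar}

/-- The transition rules `Γ'` of the automaton `𝒞'_{RS_{𝒮°}}(ℛ)`. -/
def Γ' (C : CrsSetup Q R S) : Set (TARule (F ⊕ F) (arC ar) Q) :=
  C.toCSetup.Γsat ∪ BMatch R.liftC C.enc2 ∪ C.Etrans

end CrsSetup

/-- The transition rules of the automaton `𝒟'(ℛ,𝒮)` over `𝓕`, built from the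
transition rules `Γ'` of `𝒞'_{RS_{𝒮°}}(ℛ)`. -/
def DTransRS {F : Type} {ar : F → ℕ} {Q : Type} (Rg : TRS (F ⊕ F) (arC ar))
    (Γ' : Set (TARule (F ⊕ F) (arC ar) Q)) (enc2 : Term (F ⊕ F) (arC ar) → Q) :
    Set (TARule F ar (Set Q × Set Q)) :=
  { ρ | ∃ (f : F) (SP : Fin (ar f) → Set Q × Set Q) (P1 P2 : Set Q),
      P1 ⊆ (⋃ i : Fin (ar f), oneStep Γ' (Sum.inl f)
              (fun (j : Fin (ar f)) => if j = i then (SP j).2 else (SP j).1)) ∧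
      (∀ (i : Fin (ar f)), ∀ q ∈ (SP i).2,
        (P1 ∩ oneStep Γ' (Sum.inl f) (fun (j : Fin (ar f)) => if j = i then {q} else (SP j).1)).Nonempty) ∧
      ((LhsMatch Rg enc2 (Sum.inl f) (fun i => (SP i).1) ∧ P2.Nonempty ∧
          P2 ⊆ oneStep Γ' (Sum.inr f) (fun i => (SP i).1)) ∨
       (¬ LhsMatch Rg enc2 (Sum.inl f) (fun i => (SP i).1) ∧ P2 = (∅ : Set Q))) ∧
      ρ = ⟨f, SP, (oneStep Γ' (Sum.inl f) (fun i => (SP i).1), P1 ∪ P2)⟩ }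

/-- The automaton `𝒟'(ℛ,𝒮)`: final states are the pairs `[S,P]` with
`S ∩ Q_f' ≠ ∅` and `P ⊆ Q_f`. -/
def DAutomatonRS {F : Type} {ar : F → ℕ} {Q : Type} (Rg : TRS (F ⊕ F) (arC ar))
    (Γ' : Set (TARule (F ⊕ F) (arC ar) Q)) (enc2 : Term (F ⊕ F) (arC ar) → Q)
    (Qf' Qf : Set Q) : TreeAutomaton F ar (Set Q × Set Q) where
  trans := DTransRS Rg Γ' enc2
  final := { SP | (SP.1 ∩ Qf').Nonempty ∧ SP.2 ⊆ Qf }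


/-!
A run of `𝒟(ℛ)` on `s` computes in its first component the set of `𝒞'`-states of `s`, and in
its second component, for every redex position `p`, a state reached by `s[•]_p`: at the root
`•` reaches `⟨x⟩ ∈ P²`, and the covering condition on `P¹` carries such a state up through the
context. A state of `P ⊆ Q_f` is a state of `𝒞_T(ℛ)`, and the rules added in `𝒞'` all end in
fresh states, so the run of `s[•]_p` uses saturated rules only. For a left-linear growing
system every saturated rule is simulated by a root rewrite step, so `s[•]_p →_ℛ* v` for a term
`v` accepted by `𝒜_T ∪ ℬ(ℛ)` in a final state of `𝒜_T`; since shared states accept the same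
terms in both automata, `v` is accepted by `𝒜_T`, i.e. `v ∈ NF_{ℛ•}`.
-/

namespace Term

variable {F : Type} {ar : F → ℕ}

lemma mem_vars_app_iff {f : F} {ts : Fin (ar f) → Term F ar} {n : ℕ} :
    n ∈ (app f ts).vars ↔ ∃ i, n ∈ (ts i).vars := by
  simp [vars]

lemma mem_vars_app {f : F} {ts : Fin (ar f) → Term F ar} {i : Fin (ar f)} {n : ℕ}
    (hn : n ∈ (ts i).vars) : n ∈ (app f ts).vars :=
  mem_vars_app_iff.2 ⟨i, hn⟩

lemma ground_app_iff {f : F} {ts : Fin (ar f) → Term F ar} :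
    (app f ts).Ground ↔ ∀ i, (ts i).Ground := by
  simp only [Ground, Finset.eq_empty_iff_forall_notMem, mem_vars_app_iff, not_exists]
  exact forall_comm

lemma not_ground_var (n : ℕ) : ¬ (var n : Term F ar).Ground := by
  simp [Ground, vars]

lemma Ground.of_subst {t : Term F ar} {σ : ℕ → Term F ar} (h : (t.subst σ).Ground) :
    ∀ n ∈ t.vars, (σ n).Ground := by
  induction t with
  | var m => simpa [vars, subst] using h
  | app f ts ih =>
      simp only [subst, ground_app_iff] at h
      simp only [mem_vars_app_iff, forall_exists_index]
      exact fun n i hn => ih i (h i) n hn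

lemma subst_congr {t : Term F ar} {σ σ' : ℕ → Term F ar}
    (h : ∀ n ∈ t.vars, σ n = σ' n) : t.subst σ = t.subst σ' := by
  induction t with
  | var n => exact h n (by simp [vars])
  | app f ts ih =>
      simp only [subst, app.injEq, heq_eq_eq, true_and]
      exact funext fun i => ih i fun n hn => h n (mem_vars_app hn)

lemma one_le_count_of_mem_vars {t : Term F ar} {n : ℕ} (h : n ∈ t.vars) :
    1 ≤ t.count n := by
  induction t with
  | var m => simp_all [vars, count]
  | app f ts ih =>
      obtain ⟨i, hi⟩ := mem_vars_app_iff.1 h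
      exact (ih i hi).trans (Finset.single_le_sum (f := fun j => (ts j).count n)
        (fun _ _ => Nat.zero_le _) (Finset.mem_univ i))

lemma Linear.arg {f : F} {ts : Fin (ar f) → Term F ar} (h : (app f ts).Linear)
    (i : Fin (ar f)) : (ts i).Linear := fun n =>
  (Finset.single_le_sum (f := fun j => (ts j).count n) (fun _ _ => Nat.zero_le _)
    (Finset.mem_univ i)).trans (h n)

lemma Linear.eq_of_mem_vars {f : F} {ts : Fin (ar f) → Term F ar} (h : (app f ts).Linear)
    {n : ℕ} {i j : Fin (ar f)} (hi : n ∈ (ts i).vars) (hj : n ∈ (ts j).vars) : i = j := by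
  by_contra hij
  have hsum : (ts i).count n + (ts j).count n ≤ ∑ k, (ts k).count n :=
    Finset.add_le_sum (f := fun k => (ts k).count n) (fun _ _ => Nat.zero_le _)
      (Finset.mem_univ i) (Finset.mem_univ j) hij
  have hle : ∑ k, (ts k).count n ≤ 1 := h n
  have hi₁ := one_le_count_of_mem_vars hi
  have hj₁ := one_le_count_of_mem_vars hj
  omega

lemma subtermAt_append {p q : List ℕ} {u t s : Term F ar}
    (hp : u.subtermAt p = some t) (hq : t.subtermAt q = some s) :
    u.subtermAt (p ++ q) = some s := by
  induction p generalizing u with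
  | nil => cases u <;> simp_all [subtermAt]
  | cons i p ih =>
      cases u with
      | var m => simp [subtermAt] at hp
      | app f ts =>
          simp only [subtermAt, List.cons_append] at hp ⊢
          split at hp
          · rw [dif_pos ‹_›]; exact ih hp
          · simp at hp

lemma IsSubtermOf.trans {s t u : Term F ar} (hst : s.IsSubtermOf t) (htu : t.IsSubtermOf u) :
    s.IsSubtermOf u :=
  let ⟨p, hp⟩ := hst
  let ⟨p', hp'⟩ := htu
  ⟨p' ++ p, subtermAt_append hp' hp⟩

lemma isSubtermOf_refl (t : Term F ar) : t.IsSubtermOf t := ⟨[], by cases t <;> rfl⟩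

lemma isSubtermOf_app {f : F} {ts : Fin (ar f) → Term F ar} (i : Fin (ar f)) :
    (ts i).IsSubtermOf (app f ts) :=
  ⟨[i.1], by simp [subtermAt]⟩

end Term

section Relabel

variable {F G : Type} {ar : F → ℕ} {arG : G → ℕ} {φ : F → G} {hφ : ∀ f, arG (φ f) = ar f}

lemma Term.vars_relabel (t : Term F ar) : (t.relabel φ hφ).vars = t.vars := by
  induction t with
  | var n => rfl
  | app f ts ih =>
      ext n
      simp only [Term.relabel, Term.mem_vars_app_iff, ih]
      exact (finCongr (hφ f)).exists_congr_left

lemma Term.count_relabel (t : Term F ar) (n : ℕ) : (t.relabel φ hφ).count n = t.count n := by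
  induction t with
  | var m => rfl
  | app f ts ih =>
      simp only [Term.relabel, Term.count, ih]
      exact Fintype.sum_equiv (finCongr (hφ f)) _ _ fun _ => rfl

lemma Term.relabel_subst (t : Term F ar) (σ : ℕ → Term F ar) :
    (t.subst σ).relabel φ hφ = (t.relabel φ hφ).subst fun n => (σ n).relabel φ hφ := by
  induction t with
  | var n => rfl
  | app f ts ih =>
      simp only [Term.subst, Term.relabel, Term.app.injEq, heq_eq_eq, true_and]
      exact funext fun i => ih _

lemma Term.ground_relabel_iff {t : Term F ar} : (t.relabel φ hφ).Ground ↔ t.Ground := by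
  rw [Term.Ground, Term.Ground, Term.vars_relabel]

lemma TRS.LeftLinear.relabel {R : TRS F ar} (h : R.LeftLinear) (φ : F → G)
    (hφ : ∀ f, arG (φ f) = ar f) : (R.relabel φ hφ).LeftLinear := by
  rintro _ ⟨lr, hlr, rfl⟩ n
  exact (Term.count_relabel lr.1 n).trans_le (h lr hlr n)

lemma TRS.Growing.relabel {R : TRS F ar} (h : R.Growing) (φ : F → G)
    (hφ : ∀ f, arG (φ f) = ar f) : (R.relabel φ hφ).Growing := by
  rintro _ ⟨lr, hlr, rfl⟩ n hnl hnr g ts hl i hni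
  simp only [Term.vars_relabel] at hnl hnr
  cases hlhs : lr.1 with
  | var m => exact absurd hlhs (R.lhs_not_var lr hlr m)
  | app f us =>
      simp only [hlhs, Term.relabel] at hl
      cases hl
      simp only [Term.vars_relabel] at hni
      simp only [h lr hlr n hnl hnr f us hlhs _ hni, Term.relabel]

lemma vars_liftB (t : Term F ar) : (liftB t).vars = t.vars :=
  Term.vars_relabel t

lemma liftB_subst (t : Term F ar) (σ : ℕ → Term F ar) :
    liftB (t.subst σ) = (liftB t).subst fun n => liftB (σ n) :=
  Term.relabel_subst t σ

end Relabel

section Rewriting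

variable {F : Type} {ar : F → ℕ} {R : Set (Term F ar × Term F ar)}

lemma Term.subtermAt_nil (t : Term F ar) : t.subtermAt [] = some t := by cases t <;> rfl

lemma Term.replaceAt_nil (t u : Term F ar) : t.replaceAt [] u = some u := by cases t <;> rfl

lemma Term.replaceAt_app_cons {f : F} {ts : Fin (ar f) → Term F ar} {i : Fin (ar f)}
    {p : List ℕ} {u v : Term F ar} (h : (ts i).replaceAt p u = some v) :
    (Term.app f ts).replaceAt (i.1 :: p) u = some (Term.app f (Function.update ts i v)) := by
  simp [Term.replaceAt, h]

lemma rewrites_subst {l r : Term F ar} (h : (l, r) ∈ R) (σ : ℕ → Term F ar) :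
    Rewrites R (l.subst σ) (r.subst σ) :=
  ⟨[], l, r, σ, h, Term.subtermAt_nil _, Term.replaceAt_nil _ _⟩

lemma Rewrites.app_update {a b : Term F ar} (h : Rewrites R a b) {f : F}
    (ts : Fin (ar f) → Term F ar) (i : Fin (ar f)) :
    Rewrites R (Term.app f (Function.update ts i a)) (Term.app f (Function.update ts i b)) := by
  obtain ⟨p, l, r, σ, hR, hl, hr⟩ := h
  refine ⟨i.1 :: p, l, r, σ, hR, by simpa [Term.subtermAt] using hl, ?_⟩
  simpa using Term.replaceAt_app_cons (ts := Function.update ts i a) (i := i)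
    (by rwa [Function.update_self])

lemma RewritesStar.app {f : F} {us vs : Fin (ar f) → Term F ar}
    (h : ∀ i, RewritesStar R (us i) (vs i)) :
    RewritesStar R (Term.app f us) (Term.app f vs) := by
  classical
  suffices ∀ I : Finset (Fin (ar f)),
      RewritesStar R (Term.app f us) (Term.app f (I.piecewise vs us)) by
    simpa using this Finset.univ
  intro I
  induction I using Finset.induction_on with
  | empty => simpa using Relation.ReflTransGen.refl
  | @insert j I hj ih =>
      refine ih.trans ?_
      rw [Finset.piecewise_insert]
      conv_lhs => rw [← Function.update_eq_self j (I.piecewise vs us),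
        Finset.piecewise_eq_of_notMem _ _ _ hj]
      exact (h j).lift _ fun _ _ hab => hab.app_update _ j

lemma TRS.RedexPos.of_cons {R : TRS F ar} {f : F} {ts : Fin (ar f) → Term F ar} {i : ℕ}
    {p : List ℕ} (h : R.RedexPos (Term.app f ts) (i :: p)) :
    ∃ hi : i < ar f, R.RedexPos (ts ⟨i, hi⟩) p := by
  obtain ⟨u, hu, hred⟩ := h
  simp only [Term.subtermAt] at hu
  split at hu
  · exact ⟨‹_›, u, hu, hred⟩
  · cases hu

end Rewriting

section Reaches

variable {F : Type} {ar : F → ℕ} {Q : Type} {Γ : Set (TARule F ar Q)}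

lemma TARule.mk_inj {f g : F} {qs : Fin (ar f) → Q} {qs' : Fin (ar g) → Q} {q q' : Q}
    (h : (⟨f, qs, q⟩ : TARule F ar Q) = ⟨g, qs', q'⟩) :
    ∃ hfg : f = g, qs = (fun i => qs' (Fin.cast (congrArg ar hfg) i)) ∧ q = q' := by
  obtain ⟨rfl, h⟩ := Sigma.mk.inj_iff.1 h
  cases eq_of_heq h
  exact ⟨rfl, rfl, rfl⟩

lemma Reaches.mono {Γ' : Set (TARule F ar Q)} (hΓ : Γ ⊆ Γ') {t : Term F ar} {q : Q}
    (h : Reaches Γ t q) : Reaches Γ' t q := by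
  induction h with
  | app _ hρ ih => exact .app ih (hΓ hρ)

lemma Reaches.ground {t : Term F ar} {q : Q} (h : Reaches Γ t q) : t.Ground := by
  induction h with
  | app _ _ ih => exact Term.ground_app_iff.2 ih

lemma ReachesT.reaches_subst {θ : ℕ → Q} {r : Term F ar} {q : Q} (h : ReachesT Γ θ r q)
    {σ : ℕ → Term F ar} (hσ : ∀ n ∈ r.vars, Reaches Γ (σ n) (θ n)) :
    Reaches Γ (r.subst σ) q := by
  induction h with
  | var n => exact hσ n (by simp [Term.vars])
  | app _ hρ ih => exact .app (fun i => ih i fun n hn => hσ n (Term.mem_vars_app hn)) hρ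

lemma Reaches.app_update {f : F} {ts : Fin (ar f) → Term F ar} {qs : Fin (ar f) → Q} {q : Q}
    {i : Fin (ar f)} {u : Term F ar} (hts : ∀ j ≠ i, Reaches Γ (ts j) (qs j))
    (hu : Reaches Γ u (qs i)) (hρ : (⟨f, qs, q⟩ : TARule F ar Q) ∈ Γ) :
    Reaches Γ (Term.app f (Function.update ts i u)) q := by
  refine .app (fun j => ?_) hρ
  by_cases hj : j = i
  · subst hj; simpa using hu
  · simpa [hj] using hts j hj

lemma Reaches.exists_of_iUnion {Γs : ℕ → Set (TARule F ar Q)} (hmono : Monotone Γs)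
    {t : Term F ar} {q : Q} (h : Reaches (⋃ k, Γs k) t q) : ∃ k, Reaches (Γs k) t q := by
  induction h with
  | app _ hρ ih =>
      choose ks hks using ih
      obtain ⟨k, hk⟩ := Set.mem_iUnion.1 hρ
      refine ⟨max k (Finset.univ.sup ks), .app (fun i => (hks i).mono (hmono ?_))
        (hmono (le_max_left _ _) hk)⟩
      exact le_max_of_le_right (Finset.le_sup (Finset.mem_univ i))

lemma dn_app (Γ : Set (TARule F ar Q)) (f : F) (ts : Fin (ar f) → Term F ar) :
    dn Γ (Term.app f ts) = oneStep Γ f fun i => dn Γ (ts i) := by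
  ext q
  constructor
  · rintro ⟨hts, hρ⟩
    exact ⟨_, hts, hρ⟩
  · rintro ⟨qs, hqs, hρ⟩
    exact .app hqs hρ

end Reaches

section Patterns

variable {F : Type} {ar : F → ℕ} {R : TRS F ar}

lemma mem_SR_of_isSubtermOf {t s : Term F ar} (ht : t ∈ SR R) (hs : s.IsSubtermOf t) :
    s ∈ SR R :=
  let ⟨lr, hlr, f, ts, hl, i, hsub⟩ := ht
  ⟨lr, hlr, f, ts, hl, i, hs.trans hsub⟩

lemma arg_mem_SR {f : F} {ts : Fin (ar f) → Term F ar} (h : Term.app f ts ∈ SR R)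
    (i : Fin (ar f)) : ts i ∈ SR R :=
  mem_SR_of_isSubtermOf h (Term.isSubtermOf_app i)

lemma lhs_arg_mem_SR {f : F} {ls : Fin (ar f) → Term F ar} {r : Term F ar}
    (h : (Term.app f ls, r) ∈ R.rules) (i : Fin (ar f)) : ls i ∈ SR R :=
  ⟨_, h, f, ls, rfl, i, Term.isSubtermOf_refl _⟩

lemma var_zero_mem_BStateSet : (Term.var 0 : Term F ar) ∈ BStateSet R := Or.inr rfl

lemma stPattern_mem_BStateSet {t : Term F ar} (h : t ∈ SR R) : stPattern t ∈ BStateSet R :=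
  Or.inl ⟨t, h, rfl⟩

lemma app_mem_SR_of_mem_BStateSet {f : F} {ts : Fin (ar f) → Term F ar}
    (h : Term.app f ts ∈ BStateSet R) : Term.app f ts ∈ SR R := by
  rcases h with ⟨t, ht, hp⟩ | h
  · cases t with
    | var m => cases hp
    | app g us => rwa [← hp]
  · cases h

lemma stPattern_eq_of_mem_BStateSet {p : Term F ar} (hp : p ∈ BStateSet R) :
    stPattern p = p := by
  rcases hp with ⟨t, -, rfl⟩ | rfl <;> [cases t; skip] <;> rfl

/-- Matching occurrence by occurrence: different occurrences of one variable of `l` may be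
matched by different subterms of `v`. -/
inductive Matches : Term F ar → Term F ar → Prop
  | var (u : Term F ar) (n : ℕ) : Matches u (Term.var n)
  | app {f : F} {us ts : Fin (ar f) → Term F ar} :
      (∀ i, Matches (us i) (ts i)) → Matches (Term.app f us) (Term.app f ts)

lemma Matches.exists_subst {l v : Term F ar} (hm : Matches v l) (hl : l.Linear)
    (τ₀ : ℕ → Term F ar) : ∃ τ, v = l.subst τ ∧ ∀ n ∉ l.vars, τ n = τ₀ n := by
  classical
  induction hm generalizing τ₀ with
  | var u n =>
      refine ⟨Function.update τ₀ n u, by simp [Term.subst], fun m hm => ?_⟩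
      exact Function.update_of_ne (by simpa [Term.vars] using hm) _ _
  | @app f us ts _ ih =>
      choose τs hτs hτs₀ using fun i => ih i (hl.arg i) τ₀
      refine ⟨fun n => if h : ∃ i, n ∈ (ts i).vars then τs h.choose n else τ₀ n, ?_, ?_⟩
      · simp only [Term.subst, Term.app.injEq, heq_eq_eq, true_and]
        refine funext fun i => (hτs i).trans (Term.subst_congr fun n hn => ?_)
        have hex : ∃ j, n ∈ (ts j).vars := ⟨i, hn⟩
        rw [dif_pos hex, hl.eq_of_mem_vars hex.choose_spec hn]
      · intro n hn
        exact dif_neg fun ⟨i, hi⟩ => hn (Term.mem_vars_app hi)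

variable {Q : Type} {Δ : Set (TARule F ar Q)} {e e' : Term F ar → Q}

lemma reaches_var_zero_of_ground (hBP : BProp e ⊆ Δ) {v : Term F ar} (hv : v.Ground) :
    Reaches Δ v (e (Term.var 0)) := by
  induction v with
  | var n => exact absurd hv (Term.not_ground_var n)
  | app f ts ih => exact .app (fun i => ih i (Term.ground_app_iff.1 hv i)) (hBP ⟨f, rfl⟩)

lemma reaches_stPattern_of_subst (hBM : BMatch R e ⊆ Δ) (hBP : BProp e' ⊆ Δ)
    (hx : e (Term.var 0) = e' (Term.var 0)) {t : Term F ar} (ht : stPattern t ∈ BStateSet R)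
    {σ : ℕ → Term F ar} (hσ : ∀ n ∈ t.vars, (σ n).Ground) :
    Reaches Δ (t.subst σ) (e (stPattern t)) := by
  induction t with
  | var n =>
      rw [stPattern, hx]
      exact reaches_var_zero_of_ground hBP (hσ n (by simp [Term.vars]))
  | app f ts ih =>
      have hSR := app_mem_SR_of_mem_BStateSet ht
      refine .app (fun i => ih i (stPattern_mem_BStateSet (arg_mem_SR hSR i))
        fun n hn => hσ n (Term.mem_vars_app hn)) (hBM ⟨f, ts, hSR, rfl⟩)

lemma mem_BTrans_states {ρ : TARule F ar Q} (hρ : ρ ∈ BTrans R e) :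
    ρ.2.2 ∈ e '' BStateSet R ∧ ∀ i, ρ.2.1 i ∈ e '' BStateSet R := by
  rcases hρ with ⟨f, ts, hSR, rfl⟩ | ⟨f, rfl⟩
  · exact ⟨⟨_, stPattern_mem_BStateSet hSR, rfl⟩,
      fun i => ⟨_, stPattern_mem_BStateSet (arg_mem_SR hSR i), rfl⟩⟩
  · exact ⟨⟨_, var_zero_mem_BStateSet, rfl⟩, fun _ => ⟨_, var_zero_mem_BStateSet, rfl⟩⟩

lemma Matches.of_reaches_BTrans (he : Set.InjOn e (BStateSet R)) {t : Term F ar}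
    (ht : stPattern t ∈ BStateSet R) {v : Term F ar}
    (hv : Reaches (BTrans R e) v (e (stPattern t))) : Matches v t := by
  induction t generalizing v with
  | var n => exact .var v n
  | app f ts ih =>
      have hSR := app_mem_SR_of_mem_BStateSet ht
      cases hv with
      | app hus hρ =>
          rcases hρ with ⟨g, ts', hSR', hρ⟩ | ⟨g, hρ⟩
          · obtain ⟨rfl, rfl, hq⟩ := TARule.mk_inj hρ
            cases he ht (stPattern_mem_BStateSet hSR') hq
            exact .app fun i => ih i (stPattern_mem_BStateSet (arg_mem_SR hSR i)) (hus i)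
          · obtain ⟨rfl, -, hq⟩ := TARule.mk_inj hρ
            cases he ht var_zero_mem_BStateSet hq

end Patterns

section Saturation

variable {F : Type} {ar : F → ℕ} {Q : Type} {R : TRS F ar} {enc : Term F ar → Q} {Qc : Set Q}

lemma monotone_satStep_iterate (Γ₀ : Set (TARule F ar Q)) :
    Monotone fun k => (satStep R enc Qc)^[k] Γ₀ := fun _ _ hkl =>
  Function.monotone_iterate_of_id_le (fun _ => Set.subset_union_left) hkl Γ₀

lemma subset_satGamma (Γ₀ : Set (TARule F ar Q)) : Γ₀ ⊆ satGamma R enc Qc Γ₀ :=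
  Set.subset_iUnion_of_subset 0 subset_rfl

lemma satStep_args_mem (hQc : enc '' BStateSet R ⊆ Qc) {Γ : Set (TARule F ar Q)}
    (hΓ : ∀ ρ ∈ Γ, ∀ i, ρ.2.1 i ∈ Qc) : ∀ ρ ∈ satStep R enc Qc Γ, ∀ i, ρ.2.1 i ∈ Qc := by
  rintro ρ (hρ | ⟨f, ls, r, θ, q, hrule, hθ, -, rfl⟩) i
  · exact hΓ ρ hρ i
  · show satArg enc θ r.vars (ls i) ∈ Qc
    have hSR := lhs_arg_mem_SR hrule i
    cases hl : ls i with
    | var n =>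
        by_cases hn : n ∈ r.vars
        · simpa [satArg, hn] using hθ n hn
        · simpa [satArg, hn] using hQc ⟨_, var_zero_mem_BStateSet, rfl⟩
    | app g ts =>
        rw [hl] at hSR
        exact hQc ⟨_, stPattern_mem_BStateSet hSR, rfl⟩

lemma satGamma_args_mem (hQc : enc '' BStateSet R ⊆ Qc) {Γ₀ : Set (TARule F ar Q)}
    (hΓ₀ : ∀ ρ ∈ Γ₀, ∀ i, ρ.2.1 i ∈ Qc) : ∀ ρ ∈ satGamma R enc Qc Γ₀, ∀ i, ρ.2.1 i ∈ Qc := by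
  intro ρ hρ
  obtain ⟨k, hk⟩ := Set.mem_iUnion.1 hρ
  induction k generalizing ρ with
  | zero => exact hΓ₀ ρ hk
  | succ k ih =>
      rw [Function.iterate_succ_apply'] at hk
      exact satStep_args_mem hQc (fun ρ' hρ' => ih ρ' (Set.mem_iUnion.2 ⟨k, hρ'⟩) hρ') ρ hk

end Saturation

namespace CSetup

variable {G : Type} [Fintype G] {arG : G → ℕ} {Q : Type} [Fintype Q]
  {Rg : TRS G arG} {T : Set (Term G arG)} (C : CSetup Q Rg T)

lemma Γ0_args_mem : ∀ ρ ∈ C.Γ0, ∀ i, ρ.2.1 i ∈ C.Qstates := by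
  rintro ρ (hρ | hρ) i
  · exact Or.inl ((C.hAstates ρ hρ).2 i)
  · exact Or.inr ((mem_BTrans_states hρ).2 i)

lemma Γsat_args_mem : ∀ ρ ∈ C.Γsat, ∀ i, ρ.2.1 i ∈ C.Qstates :=
  satGamma_args_mem Set.subset_union_right C.Γ0_args_mem

lemma exists_reaches_Γ0 {q : Q} (hq : q ∈ C.Qstates) : ∃ t, Reaches C.Γ0 t q := by
  rcases hq with hq | ⟨p, hp, rfl⟩
  · obtain ⟨t, -, ht⟩ := C.hacc q hq
    exact ⟨t, ht.mono Set.subset_union_left⟩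
  · obtain ⟨g, hg⟩ := C.hground
    have hpat := stPattern_eq_of_mem_BStateSet hp
    refine ⟨p.subst fun _ => g, ?_⟩
    have hreach := reaches_stPattern_of_subst (Δ := C.Γ0) (fun _ h => Or.inr (Or.inl h))
      (fun _ h => Or.inr (Or.inr h)) rfl (hpat ▸ hp) (σ := fun _ => g) fun _ _ => hg
    rwa [hpat] at hreach

/-- A run can only switch between `𝒜_T` and `ℬ(ℛ)` at a shared state, which accepts the same
terms in both. -/
lemma reaches_A_and_B_of_reaches_Γ0 {u : Term G arG} {q : Q} (h : Reaches C.Γ0 u q) :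
    (q ∈ C.QA → Reaches C.A.trans u q) ∧
    (q ∈ C.enc '' BStateSet Rg → Reaches (BTrans Rg C.enc) u q) := by
  induction h with
  | @app f ts qs q _ hρ ih =>
      rcases hρ with hρ | hρ
      · have hA : Reaches C.A.trans (Term.app f ts) q :=
          .app (fun i => (ih i).1 ((C.hAstates _ hρ).2 i)) hρ
        exact ⟨fun _ => hA, fun hq => (C.hshared q ⟨(C.hAstates _ hρ).1, hq⟩ _).1 hA⟩
      · have hB : Reaches (BTrans Rg C.enc) (Term.app f ts) q :=
          .app (fun i => (ih i).2 ((mem_BTrans_states hρ).2 i)) hρ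
        exact ⟨fun hq => (C.hshared q ⟨hq, (mem_BTrans_states hρ).1⟩ _).2 hB, fun _ => hB⟩

lemma matches_of_reaches_satArg {l : Term G arG} (hl : l ∈ SR Rg) {θ : ℕ → Q}
    {rv : Finset ℕ} {v : Term G arG} (h : Reaches C.Γ0 v (satArg C.enc θ rv l)) :
    Matches v l := by
  cases l with
  | var n => exact .var v n
  | app f ts =>
      have hB := stPattern_mem_BStateSet hl
      exact .of_reaches_BTrans C.henc hB ((C.reaches_A_and_B_of_reaches_Γ0 h).2 ⟨_, hB, rfl⟩)

/-- The run of a rule added by saturation is simulated by one rewrite step at the root: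
linearity lets the matched arguments be read as an instance of the left-hand side, and
growingness puts every shared variable at depth 1, where the run provides its state. -/
lemma exists_rewrites_of_satRule (hll : Rg.LeftLinear) (hgr : Rg.Growing)
    {Γ : Set (TARule G arG Q)} (hΓ0 : C.Γ0 ⊆ Γ) {g : G} {ls : Fin (arG g) → Term G arG}
    {r : Term G arG} {θ : ℕ → Q} {q : Q}
    (hrule : (Term.app g ls, r) ∈ Rg.rules) (hθ : ∀ n ∈ r.vars, θ n ∈ C.Qstates)
    (hr : ReachesT Γ θ r q) {vs : Fin (arG g) → Term G arG}
    (hvs : ∀ i, Reaches C.Γ0 (vs i) (satArg C.enc θ r.vars (ls i))) :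
    ∃ w, Rewrites Rg.rules (Term.app g vs) w ∧ Reaches Γ w q := by
  classical
  have hacc : ∀ n, ∃ t, n ∈ r.vars → Reaches C.Γ0 t (θ n) := fun n =>
    if hn : n ∈ r.vars then (C.exists_reaches_Γ0 (hθ n hn)).imp fun _ h _ => h
    else ⟨.var 0, fun h => absurd h hn⟩
  choose τ₀ hτ₀ using hacc
  have hmatch : Matches (Term.app g vs) (Term.app g ls) :=
    .app fun i => C.matches_of_reaches_satArg (lhs_arg_mem_SR hrule i) (hvs i)
  obtain ⟨τ, hτ, hττ₀⟩ := hmatch.exists_subst (hll _ hrule) τ₀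
  refine ⟨r.subst τ, hτ ▸ rewrites_subst hrule τ, hr.reaches_subst fun n hn => ?_⟩
  by_cases hnl : n ∈ (Term.app g ls).vars
  · obtain ⟨i, hi⟩ := Term.mem_vars_app_iff.1 hnl
    have hlsi : ls i = .var n := hgr _ hrule n hnl hn g ls rfl i hi
    have hvi : vs i = τ n := by
      simp only [Term.subst, Term.app.injEq, heq_eq_eq, true_and] at hτ
      rw [congrFun hτ i, hlsi, Term.subst]
    simpa [hvi, hlsi, satArg, hn] using (hvs i).mono hΓ0
  · rw [hττ₀ n hnl]
    exact (hτ₀ n hn).mono hΓ0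

lemma satStep_sound (hll : Rg.LeftLinear) (hgr : Rg.Growing) {Γ : Set (TARule G arG Q)}
    (hΓ0 : C.Γ0 ⊆ Γ)
    (ih : ∀ {u q}, Reaches Γ u q → ∃ v, RewritesStar Rg.rules u v ∧ Reaches C.Γ0 v q)
    {u : Term G arG} {q : Q} (h : Reaches (satStep Rg C.enc C.Qstates Γ) u q) :
    ∃ v, RewritesStar Rg.rules u v ∧ Reaches C.Γ0 v q := by
  induction h with
  | @app g us qs q _ hρ ihArgs =>
      choose vs hvs hvs0 using ihArgs
      have hus : RewritesStar Rg.rules (Term.app g us) (Term.app g vs) := .app hvs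
      rcases hρ with hρ | ⟨f, ls, r, θ, q', hrule, hθ, hr, hρ⟩
      · obtain ⟨w, hw, hw0⟩ := ih (.app (fun i => (hvs0 i).mono hΓ0) hρ)
        exact ⟨w, hus.trans hw, hw0⟩
      · obtain ⟨rfl, rfl, rfl⟩ := TARule.mk_inj hρ
        obtain ⟨w, hstep, hw⟩ := C.exists_rewrites_of_satRule hll hgr hΓ0 hrule hθ hr hvs0
        obtain ⟨w', hw', hw'0⟩ := ih hw
        exact ⟨w', (hus.tail hstep).trans hw', hw'0⟩

lemma exists_rewritesStar_of_reaches_Γsat (hll : Rg.LeftLinear) (hgr : Rg.Growing)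
    {u : Term G arG} {q : Q} (h : Reaches C.Γsat u q) :
    ∃ v, RewritesStar Rg.rules u v ∧ Reaches C.Γ0 v q := by
  obtain ⟨k, hk⟩ := Reaches.exists_of_iUnion (monotone_satStep_iterate _) h
  clear h
  induction k generalizing u q with
  | zero => exact ⟨u, .refl, hk⟩
  | succ k ih =>
      rw [Function.iterate_succ_apply'] at hk
      exact C.satStep_sound hll hgr (monotone_satStep_iterate _ (Nat.zero_le k)) ih hk

end CSetup

namespace CpSetup

variable {G : Type} [Fintype G] {arG : G → ℕ} {Q : Type} [Fintype Q]
  {Rg : TRS G arG} {T : Set (Term G arG)} (C : CpSetup Q Rg T)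

lemma BMatch_enc2_subset_Γ' : BMatch Rg C.enc2 ⊆ C.Γ' := fun _ h => Or.inl (Or.inl (Or.inr h))

lemma BProp_subset_Γ' : BProp C.enc ⊆ C.Γ' := fun _ h =>
  Or.inl (Or.inl (Or.inl (subset_satGamma _ (Or.inr (Or.inr h)))))

lemma mem_Γsat_of_mem_Γ' {ρ : TARule G arG Q} (hρ : ρ ∈ C.Γ') (hq : ρ.2.2 ∈ C.Qstates) :
    ρ ∈ C.Γsat := by
  have hfresh : ρ.2.2 ∉ C.enc2 '' (BStateSet Rg \ {Term.var 0}) ∪ {C.qr} := fun h =>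
    Set.eq_empty_iff_forall_notMem.1 C.hfresh _ ⟨h, hq⟩
  rcases hρ with ((hρ | ⟨f, ts, hSR, rfl⟩) | ⟨f, ls, r, -, rfl⟩) | ⟨f, j, rfl⟩
  · exact hρ
  · exact absurd (Or.inl ⟨_, ⟨stPattern_mem_BStateSet hSR, by simp [stPattern]⟩, rfl⟩) hfresh
  · exact absurd (Or.inr rfl) hfresh
  · exact absurd (Or.inr rfl) hfresh

lemma reaches_Γsat_of_reaches_Γ' {u : Term G arG} {q : Q} (h : Reaches C.Γ' u q)
    (hq : q ∈ C.Qstates) : Reaches C.Γsat u q := by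
  induction h with
  | app _ hρ ih =>
      have hsat := C.mem_Γsat_of_mem_Γ' hρ hq
      exact .app (fun i => ih i (C.Γsat_args_mem _ hsat i)) hsat

end CpSetup

section DAutomaton

variable {F : Type} {ar : F → ℕ} {Q : Type} {R : TRS F ar}
  {Γ' : Set (TARule (Option F) (arB ar) Q)} {enc enc2 : Term (Option F) (arB ar) → Q}

lemma fst_eq_oneStep_of_mem_DTrans {Rb : TRS (Option F) (arB ar)} {f : F}
    {SPs : Fin (ar f) → Set Q × Set Q} {SP : Set Q × Set Q}
    (hρ : (⟨f, SPs, SP⟩ : TARule F ar (Set Q × Set Q)) ∈ DTrans Rb Γ' enc enc2) :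
    SP.1 = oneStep Γ' (some f) fun i => (SPs i).1 := by
  obtain ⟨f', SPs', P1, P2, -, -, -, hρ⟩ := hρ
  obtain ⟨rfl, rfl, rfl⟩ := TARule.mk_inj hρ
  rfl

lemma exists_cover_of_mem_DTrans {Rb : TRS (Option F) (arB ar)} {f : F}
    {SPs : Fin (ar f) → Set Q × Set Q} {SP : Set Q × Set Q}
    (hρ : (⟨f, SPs, SP⟩ : TARule F ar (Set Q × Set Q)) ∈ DTrans Rb Γ' enc enc2)
    (i : Fin (ar f)) {q : Q} (hq : q ∈ (SPs i).2) :
    ∃ q₀ ∈ SP.2, ∃ qs : Fin (ar f) → Q,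
      qs i = q ∧ (∀ j ≠ i, qs j ∈ (SPs j).1) ∧ (⟨some f, qs, q₀⟩ : TARule _ _ Q) ∈ Γ' := by
  obtain ⟨f', SPs', P1, P2, -, hcover, -, hρ⟩ := hρ
  obtain ⟨rfl, rfl, rfl⟩ := TARule.mk_inj hρ
  obtain ⟨q₀, hq₀, qs, hqs, hρ'⟩ := hcover i q hq
  refine ⟨q₀, Or.inl hq₀, qs, by simpa using hqs i, fun j hj => ?_, hρ'⟩
  simpa [hj] using hqs j

lemma var_zero_mem_snd_of_mem_DTrans {Rb : TRS (Option F) (arB ar)} {f : F}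
    {SPs : Fin (ar f) → Set Q × Set Q} {SP : Set Q × Set Q}
    (hρ : (⟨f, SPs, SP⟩ : TARule F ar (Set Q × Set Q)) ∈ DTrans Rb Γ' enc enc2)
    (hm : LhsMatch Rb enc2 (some f) fun i => (SPs i).1) : enc (Term.var 0) ∈ SP.2 := by
  obtain ⟨f', SPs', P1, P2, -, -, hP2, hρ⟩ := hρ
  obtain ⟨rfl, rfl, rfl⟩ := TARule.mk_inj hρ
  rcases hP2 with ⟨-, rfl⟩ | ⟨hnm, -⟩
  · exact Or.inr rfl
  · exact absurd hm hnm

lemma fst_eq_dn_of_reaches_DTrans {Rb : TRS (Option F) (arB ar)} {s : Term F ar}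
    {SP : Set Q × Set Q} (h : Reaches (DTrans Rb Γ' enc enc2) s SP) :
    SP.1 = dn Γ' (liftB s) := by
  induction h with
  | app _ hρ ih =>
      rw [fst_eq_oneStep_of_mem_DTrans hρ]
      exact (congrArg _ (funext ih)).trans (dn_app _ _ _).symm

lemma lhsMatch_dn_of_isRedex (hBM : BMatch R.liftB enc2 ⊆ Γ') (hBP : BProp enc ⊆ Γ')
    (hx : enc2 (Term.var 0) = enc (Term.var 0)) {f : F} {ts : Fin (ar f) → Term F ar}
    (hts : ∀ i, (ts i).Ground) (hred : R.IsRedex (Term.app f ts)) :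
    LhsMatch R.liftB enc2 (some f) fun i => dn Γ' (liftB (ts i)) := by
  obtain ⟨lr, hlr, σ, hσ⟩ := hred
  cases hl : lr.1 with
  | var m => exact absurd hl (R.lhs_not_var lr hlr m)
  | app f₀ ls =>
      rw [hl, Term.subst] at hσ
      cases hσ
      have hrule : (Term.app (some f) (fun i => liftB (ls i)), liftB lr.2) ∈ R.liftB.rules :=
        ⟨lr, hlr, show (liftB lr.1, liftB lr.2) = _ by rw [hl]; rfl⟩
      refine ⟨_, _, hrule, fun i => ?_⟩
      have hground := Term.Ground.of_subst (hts i)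
      show Reaches Γ' (liftB ((ls i).subst σ)) _
      rw [liftB_subst]
      exact reaches_stPattern_of_subst hBM hBP hx
        (stPattern_mem_BStateSet (lhs_arg_mem_SR hrule i))
        fun n hn => Term.ground_relabel_iff.2 (hground n (by rwa [← vars_liftB]))

lemma exists_mem_snd_reaches_replaceAt_bullet (hBM : BMatch R.liftB enc2 ⊆ Γ')
    (hBP : BProp enc ⊆ Γ') (hx : enc2 (Term.var 0) = enc (Term.var 0)) {s : Term F ar}
    {SP : Set Q × Set Q} (h : Reaches (DTrans R.liftB Γ' enc enc2) s SP) {p : List ℕ}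
    (hp : R.RedexPos s p) :
    ∃ q ∈ SP.2, ∃ u, (liftB s).replaceAt p bulletTm = some u ∧ Reaches Γ' u q := by
  induction h generalizing p with
  | @app f ts SPs SP hts hρ ih =>
      have hdn : ∀ j, (SPs j).1 = dn Γ' (liftB (ts j)) := fun j =>
        fst_eq_dn_of_reaches_DTrans (hts j)
      cases p with
      | nil =>
          obtain ⟨u, hu, hred⟩ := hp
          cases (Term.subtermAt_nil _).symm.trans hu
          have hm := lhsMatch_dn_of_isRedex hBM hBP hx (fun i => (hts i).ground) hred
          refine ⟨_, var_zero_mem_snd_of_mem_DTrans hρ ((funext hdn).symm ▸ hm), bulletTm,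
            Term.replaceAt_nil _ _, ?_⟩
          exact reaches_var_zero_of_ground hBP (Term.ground_app_iff.2 fun i => i.elim0)
      | cons i p =>
          obtain ⟨hi, hp⟩ := hp.of_cons
          obtain ⟨q, hq, u, hu, hqu⟩ := ih ⟨i, hi⟩ hp
          obtain ⟨q₀, hq₀, qs, rfl, hqs, hρ'⟩ := exists_cover_of_mem_DTrans hρ ⟨i, hi⟩ hq
          refine ⟨q₀, hq₀, _, Term.replaceAt_app_cons (i := (⟨i, hi⟩ : Fin (arB ar (some f)))) hu,
            ?_⟩
          exact Reaches.app_update (fun j hj => (hdn j ▸ hqs j hj : qs j ∈ dn Γ' _)) hqu hρ'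

end DAutomaton

theorem statement9_general {F : Type} [Fintype F] {ar : F → ℕ} {Q : Type} [Fintype Q]
    (R : TRS F ar) (hlin : R.IsLinear) (hgrow : R.Growing)
    (C : CpSetup Q R.liftB (TRS.NFset R.bullet))
    (s : Term F ar) (S P : Set Q)
    (h : Reaches (DTrans R.liftB C.Γ' C.enc C.enc2) s (S, P))
    (hPf : P ⊆ C.A.final)
    (p : List ℕ) (hp : R.RedexPos s p) :
    ∃ u, (liftB s).replaceAt p bulletTm = some u ∧
      ∃ t ∈ TRS.NFset R.bullet, RewritesStar R.liftB.rules u t := by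
  obtain ⟨q, hqP, u, hu, hqu⟩ :=
    exists_mem_snd_reaches_replaceAt_bullet C.BMatch_enc2_subset_Γ' C.BProp_subset_Γ' C.hx h hp
  have hqA : q ∈ C.QA := C.hfinal (hPf hqP)
  obtain ⟨v, huv, hv⟩ := C.exists_rewritesStar_of_reaches_Γsat
    (hlin.1.relabel some fun _ => rfl) (hgrow.relabel some fun _ => rfl)
    (C.reaches_Γsat_of_reaches_Γ' hqu (Or.inl hqA))
  have hvA := (C.reaches_A_and_B_of_reaches_Γ0 hv).1 hqA
  refine ⟨u, hu, v, ?_, huv⟩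
  rw [C.hT]
  exact ⟨hvA.ground, q, hPf hqP, hvA⟩

/-- Let `ℛ` be a linear growing TRS over `𝓕` and `𝒟(ℛ)` the
powerset-pair automaton built from `𝒞'_{NF_{ℛ•}}(ℛ)`.  If `s →_{Γ_𝒟}* [S,P]` with
`P ⊆ Q_f`, then for every redex position `p` of `s`, `s[•]_p` rewrites in `ℛ` to a
ground `ℛ•`-normal form. -/
theorem statement9 {F : Type} [Fintype F] {ar : F → ℕ} {Q : Type} [Fintype Q]
    (R : TRS F ar) (hlin : R.IsLinear) (hgrow : R.Growing)
    (C : CpSetup Q R.liftB (TRS.NFset R.bullet))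
    (s : Term F ar) (hs : s.Ground) (S P : Set Q)
    (h : Reaches (DTrans R.liftB C.Γ' C.enc C.enc2) s (S, P))
    (hPf : P ⊆ C.A.final)
    (p : List ℕ) (hp : R.RedexPos s p) :
    ∃ u, (liftB s).replaceAt p bulletTm = some u ∧
      ∃ t ∈ TRS.NFset R.bullet, RewritesStar R.liftB.rules u t :=
  statement9_general R hlin hgrow C s S P h hPf p hp
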